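/- arXiv:1804.04973 — 5 statements merged into one kernel-verified Lean document; each statement's English description precedes it below -/
import Mathlib

section
/- For every positive integer n, the number of subgroups Δ of ℝ with c(ℤ, Δ) = n equals 2^{ω(n)}, where ω(n) is the number of distinct primes dividing n. -/
/-!
Let `a = [ℤ : ℤ ∩ Δ]` and `b = [Δ : ℤ ∩ Δ]`, both finite. Then `ℤ ∩ Δ = aℤ` and `bΔ ⊆ aℤ`, so
`Δ ≤ (a/b)ℤ`; since `aℤ` has index `b` in both groups, `Δ = (a/b)ℤ`. Conversely, computing
indices inside the cyclic group `(1/b)ℤ ≅ ℤ` shows that `(a/b)ℤ` has indices `a / gcd(a, b)` and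
`b / gcd(a, b)`, so `Δ ↦ (a, b)` is a bijection onto the coprime factorizations `n = a * b`.
These correspond to the subsets of the prime factors of `n` via `(a, b) ↦ a.primeFactors`.
-/

open AddSubgroup Finset

theorem Int.relIndex_zmultiples (a : ℤ) {b : ℤ} (hb : b ≠ 0) :
    (zmultiples a).relIndex (zmultiples b) = a.natAbs / a.gcd b := by
  have h := relIndex_mul_index (inf_le_right : zmultiples a ⊓ zmultiples b ≤ zmultiples b)
  rw [inf_relIndex_right, Int.zmultiples_inf, Int.index_zmultiples, Int.index_zmultiples,
    Int.natAbs_natCast] at h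
  have hgcd : 0 < a.gcd b := Int.gcd_pos_of_ne_zero_right a hb
  have hb' : 0 < b.natAbs := Int.natAbs_pos.mpr hb
  refine Nat.eq_div_of_mul_eq_left hgcd.ne' (Nat.eq_of_mul_eq_mul_right hb' ?_)
  rw [mul_right_comm, h, mul_comm, Int.gcd_mul_lcm]

namespace AddSubgroup

theorem relIndex_zmultiples_zsmul {G : Type*} [AddGroup G] {x : G}
    (hx : ¬IsOfFinAddOrder x) (a b : ℤ) :
    (zmultiples (a • x)).relIndex (zmultiples (b • x)) =
      (zmultiples a).relIndex (zmultiples b) := by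
  have hinj : Function.Injective (zmultiplesHom G x) :=
    injective_zsmul_iff_not_isOfFinAddOrder.mpr hx
  rw [← relIndex_map_map_of_injective _ _ hinj]
  simp only [AddMonoidHom.map_zmultiples, zmultiplesHom_apply]

theorem inf_zmultiples_one {R : Type*} [AddGroupWithOne R] (Δ : AddSubgroup R) :
    Δ ⊓ zmultiples 1 = zmultiples (Δ.relIndex (zmultiples 1) : R) := by
  obtain ⟨c, hc⟩ := Int.subgroup_cyclic (Δ.comap (Int.castAddHom R))
  rw [← zmultiples_eq_closure] at hc
  have hindex : Δ.relIndex (zmultiples 1) = c.natAbs := by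
    rw [← Int.range_castAddHom, ← index_comap, hc, Int.index_zmultiples]
  have hcomap : Δ.comap (Int.castAddHom R) = zmultiples (Δ.relIndex (zmultiples 1) : ℤ) := by
    rw [hindex, Int.zmultiples_natAbs, hc]
  rw [inf_comm, ← Int.range_castAddHom, ← map_comap_eq, hcomap, AddMonoidHom.map_zmultiples]
  simp

section CharZeroField

variable {K : Type*} [Field K] [CharZero K]

theorem relIndex_zmultiples_natCast_div (a : ℕ) {b c : ℕ} (hb : b ≠ 0) (hc : c ≠ 0) :
    (zmultiples ((a : K) / c)).relIndex (zmultiples ((b : K) / c)) = a / a.gcd b := by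
  have hx : ¬IsOfFinAddOrder (c : K)⁻¹ := not_isOfFinAddOrder_of_isAddTorsionFree (by simpa)
  have h := relIndex_zmultiples_zsmul hx a b
  rw [Int.relIndex_zmultiples _ (by simpa), Int.natAbs_natCast, Int.gcd_natCast_natCast] at h
  simpa [div_eq_mul_inv] using h

theorem relIndex_zmultiples_div_zmultiples_one (a : ℕ) {b : ℕ} (hb : b ≠ 0) :
    (zmultiples ((a : K) / b)).relIndex (zmultiples 1) = a / a.gcd b := by
  simpa [hb] using relIndex_zmultiples_natCast_div (K := K) a hb hb

theorem relIndex_zmultiples_one_zmultiples_div {a b : ℕ} (ha : a ≠ 0) (hb : b ≠ 0) :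
    (zmultiples (1 : K)).relIndex (zmultiples ((a : K) / b)) = b / a.gcd b := by
  simpa [hb, Nat.gcd_comm] using relIndex_zmultiples_natCast_div (K := K) b ha hb

theorem eq_zmultiples_div_of_relIndex_ne_zero {Δ : AddSubgroup K}
    (ha : Δ.relIndex (zmultiples 1) ≠ 0) (hb : (zmultiples 1).relIndex Δ ≠ 0) :
    Δ = zmultiples ((Δ.relIndex (zmultiples 1) : K) / (zmultiples 1).relIndex Δ) := by
  set a := Δ.relIndex (zmultiples 1)
  set b := (zmultiples (1 : K)).relIndex Δ
  set G := zmultiples ((a : K) / b)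
  have hcap : Δ ⊓ zmultiples 1 = zmultiples (a : K) := inf_zmultiples_one Δ
  have hΔG : Δ ≤ G := by
    intro x hx
    have hbx : b • x ∈ zmultiples (a : K) := hcap ▸ ⟨nsmul_mem hx b, nsmul_relIndex_mem _ hx⟩
    obtain ⟨k, hk⟩ := mem_zmultiples_iff.mp hbx
    refine mem_zmultiples_iff.mpr ⟨k, ?_⟩
    rw [nsmul_eq_mul, zsmul_eq_mul] at hk
    rw [zsmul_eq_mul, mul_div_assoc', div_eq_iff (by simpa), hk, mul_comm]
  have haΔ : (zmultiples (a : K)).relIndex Δ = b := by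
    rw [← hcap, inf_relIndex_left]
  have haG : (zmultiples (a : K)).relIndex G = b := by
    have hx : ¬IsOfFinAddOrder ((a : K) / b) :=
      not_isOfFinAddOrder_of_isAddTorsionFree (by simp [ha, hb])
    have h := relIndex_zmultiples_zsmul hx b 1
    rwa [Int.relIndex_zmultiples _ one_ne_zero, Int.gcd_one_right, Nat.div_one,
      Int.natAbs_natCast, one_zsmul, natCast_zsmul, nsmul_eq_mul,
      mul_div_cancel₀ _ (by simpa)] at h
  have hΔG' : Δ.relIndex G = 1 := by
    have h := relIndex_mul_relIndex _ Δ G (hcap ▸ inf_le_left) hΔG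
    rw [haΔ, haG] at h
    exact Nat.eq_of_mul_eq_mul_left (Nat.pos_of_ne_zero hb) (h.trans (mul_one b).symm)
  exact le_antisymm hΔG (relIndex_eq_one.mp hΔG')

theorem coprime_relIndex_of_relIndex_ne_zero {Δ : AddSubgroup K}
    (ha : Δ.relIndex (zmultiples 1) ≠ 0) (hb : (zmultiples 1).relIndex Δ ≠ 0) :
    (Δ.relIndex (zmultiples 1)).Coprime ((zmultiples 1).relIndex Δ) := by
  have h := relIndex_zmultiples_div_zmultiples_one (K := K) (Δ.relIndex (zmultiples 1)) hb
  rw [← eq_zmultiples_div_of_relIndex_ne_zero ha hb, eq_comm, Nat.div_eq_self] at h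
  exact h.resolve_left ha

noncomputable def relIndexMulEquivCoprime {n : ℕ} (hn : n ≠ 0) :
    {Δ : AddSubgroup K // Δ.relIndex (zmultiples 1) * (zmultiples 1).relIndex Δ = n} ≃
      {p : ℕ × ℕ // p.1 * p.2 = n ∧ p.1.Coprime p.2} where
  toFun Δ := ⟨(Δ.1.relIndex (zmultiples 1), (zmultiples 1).relIndex Δ.1), Δ.2,
    coprime_relIndex_of_relIndex_ne_zero (left_ne_zero_of_mul (Δ.2 ▸ hn))
      (right_ne_zero_of_mul (Δ.2 ▸ hn))⟩
  invFun p := ⟨zmultiples ((p.1.1 : K) / p.1.2), by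
    obtain ⟨⟨a, b⟩, hab, hcop⟩ := p
    rw [relIndex_zmultiples_div_zmultiples_one a (right_ne_zero_of_mul (hab ▸ hn)),
      relIndex_zmultiples_one_zmultiples_div (left_ne_zero_of_mul (hab ▸ hn))
        (right_ne_zero_of_mul (hab ▸ hn)), hcop.gcd_eq_one, Nat.div_one, Nat.div_one]
    exact hab⟩
  left_inv Δ := Subtype.ext (eq_zmultiples_div_of_relIndex_ne_zero
    (left_ne_zero_of_mul (Δ.2 ▸ hn)) (right_ne_zero_of_mul (Δ.2 ▸ hn))).symm
  right_inv := by
    rintro ⟨⟨a, b⟩, hab, hcop⟩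
    have ha := left_ne_zero_of_mul (hab ▸ hn)
    have hb := right_ne_zero_of_mul (hab ▸ hn)
    ext
    · simp [relIndex_zmultiples_div_zmultiples_one a hb, hcop.gcd_eq_one]
    · simp [relIndex_zmultiples_one_zmultiples_div ha hb, hcop.gcd_eq_one]

end CharZeroField

end AddSubgroup

namespace Nat

theorem primeFactors_prod_pow {s : Finset ℕ} {f : ℕ → ℕ} (hs : ∀ p ∈ s, p.Prime)
    (hf : ∀ p ∈ s, f p ≠ 0) : (∏ p ∈ s, p ^ f p).primeFactors = s := by
  have hne : ∏ p ∈ s, p ^ f p ≠ 0 := prod_ne_zero_iff.2 fun p hp ↦ pow_ne_zero _ (hs p hp).ne_zero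
  ext q
  rw [mem_primeFactors_of_ne_zero hne]
  constructor
  · rintro ⟨hq, hdvd⟩
    obtain ⟨p, hp, hqp⟩ := (Prime.dvd_finsetProd_iff hq.prime _).1 hdvd
    rwa [(prime_dvd_prime_iff_eq hq (hs p hp)).1 (hq.dvd_of_dvd_pow hqp)]
  · intro hq
    exact ⟨hs q hq, (dvd_pow_self q (hf q hq)).trans (dvd_prod_of_mem _ hq)⟩

theorem prod_primeFactors_pow_factorization_mul {a b : ℕ} (ha : a ≠ 0) (hb : b ≠ 0)
    (hab : a.Coprime b) : ∏ p ∈ a.primeFactors, p ^ (a * b).factorization p = a := by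
  conv_rhs => rw [prod_primeFactors_pow_factorization ha]
  refine prod_congr rfl fun p hp ↦ ?_
  have hpb : b.factorization p = 0 :=
    Finsupp.notMem_support_iff.mp (disjoint_left.mp hab.disjoint_primeFactors hp)
  rw [factorization_mul ha hb, Finsupp.add_apply, hpb, add_zero]

section PrimeFactorsSubset

variable {n : ℕ} {s : Finset ℕ}

theorem prod_pow_factorization_mul_prod_sdiff (hn : n ≠ 0) (hs : s ⊆ n.primeFactors) :
    (∏ p ∈ s, p ^ n.factorization p) * ∏ p ∈ n.primeFactors \ s, p ^ n.factorization p = n := by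
  rw [mul_comm, prod_sdiff hs, ← prod_primeFactors_pow_factorization hn]

theorem coprime_prod_pow_factorization_prod_sdiff (hs : s ⊆ n.primeFactors) :
    (∏ p ∈ s, p ^ n.factorization p).Coprime (∏ p ∈ n.primeFactors \ s, p ^ n.factorization p) := by
  refine Coprime.prod_left fun p hp ↦ Coprime.prod_right fun q hq ↦ ?_
  rw [mem_sdiff] at hq
  refine Coprime.pow _ _ ((coprime_primes (prime_of_mem_primeFactors (hs hp))
    (prime_of_mem_primeFactors hq.1)).2 ?_)
  rintro rfl
  exact hq.2 hp

end PrimeFactorsSubset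

def coprimeMulEqEquivPowerset {n : ℕ} (hn : n ≠ 0) :
    {p : ℕ × ℕ // p.1 * p.2 = n ∧ p.1.Coprime p.2} ≃ n.primeFactors.powerset where
  toFun p := ⟨p.1.1.primeFactors, mem_powerset.2 (primeFactors_mono (Dvd.intro _ p.2.1) hn)⟩
  invFun s := ⟨(∏ p ∈ s, p ^ n.factorization p,
      ∏ p ∈ n.primeFactors \ s, p ^ n.factorization p),
    prod_pow_factorization_mul_prod_sdiff hn (mem_powerset.1 s.2),
    coprime_prod_pow_factorization_prod_sdiff (mem_powerset.1 s.2)⟩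
  left_inv := by
    rintro ⟨⟨a, b⟩, rfl, hab⟩
    have ha : a ≠ 0 := left_ne_zero_of_mul hn
    have hb : b ≠ 0 := right_ne_zero_of_mul hn
    have hsdiff : (a * b).primeFactors \ a.primeFactors = b.primeFactors := by
      rw [hab.primeFactors_mul, union_sdiff_cancel_left hab.disjoint_primeFactors]
    ext
    · exact prod_primeFactors_pow_factorization_mul ha hb hab
    · dsimp only
      rw [hsdiff, mul_comm a b]
      exact prod_primeFactors_pow_factorization_mul hb ha hab.symm
  right_inv s := by
    have hs := mem_powerset.1 s.2
    exact Subtype.ext <| primeFactors_prod_pow (fun p hp ↦ prime_of_mem_primeFactors (hs hp))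
      fun p hp ↦ Finsupp.mem_support_iff.mp (hs hp)

theorem card_coprime_mul_eq {n : ℕ} (hn : n ≠ 0) :
    Nat.card {p : ℕ × ℕ // p.1 * p.2 = n ∧ p.1.Coprime p.2} = 2 ^ n.primeFactors.card := by
  rw [Nat.card_congr (coprimeMulEqEquivPowerset hn), Nat.card_eq_finsetCard, card_powerset]

end Nat

/-- The number of subgroups `Δ ≤ ℝ` with commensurability index
`c(ℤ, Δ) = [ℤ : ℤ ∩ Δ]·[Δ : ℤ ∩ Δ] = n` equals `2 ^ ω(n)`, where `ω(n)` is the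
number of distinct prime divisors of `n`. -/
theorem card_commensurable_subgroups_eq_two_pow_omega (n : ℕ) (hn : 0 < n) :
    Nat.card {Δ : AddSubgroup ℝ //
        AddSubgroup.relIndex Δ (AddSubgroup.zmultiples (1 : ℝ)) *
          AddSubgroup.relIndex (AddSubgroup.zmultiples (1 : ℝ)) Δ = n} =
      2 ^ n.primeFactors.card := by
  rw [Nat.card_congr (relIndexMulEquivCoprime hn.ne'), Nat.card_coprime_mul_eq hn.ne']
end

section
/- Let Γ be a finitely generated nilpotent group of Hirsch length d and let m be a positive integer. Then the index [Γ : Γ^m] is at most m^d, where Γ^m is the subgroup generated by all m-th powers. -/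
/-!
Walk up the cyclic series `⊥ = H 0 ≤ ⋯ ≤ H d = Γ`, tracking the relative index of the normal
subgroup `N = Γ^m` in `H i`. Modulo `H i · (N ∩ H (i+1))`, the group `H (i+1)` is generated by
the image of a generator `g` of `H (i+1) / H i`, and `g ^ m ∈ N`, so that quotient has order at
most `m`. Hence each step multiplies the relative index by at most `m`.
-/

namespace Subgroup

open Group

variable {G : Type*} [Group G]

theorem closure_normal_of_conjugatesOfSet_subset {s : Set G} (h : conjugatesOfSet s ⊆ s) :
    (closure s).Normal := by
  have : normalClosure s = closure s :=
    le_antisymm (closure_mono h) (closure_mono subset_conjugatesOfSet)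
  exact this ▸ normalClosure_normal

theorem closure_pow_normal (m : ℕ) : (closure {x : G | ∃ g : G, x = g ^ m}).Normal := by
  refine closure_normal_of_conjugatesOfSet_subset fun x hx => ?_
  obtain ⟨_, ⟨g, rfl⟩, hconj⟩ := mem_conjugatesOfSet_iff.mp hx
  obtain ⟨c, rfl⟩ := isConj_iff.mp hconj
  exact ⟨c * g * c⁻¹, conj_pow.symm⟩

theorem index_le_of_zpow_generates {M : Subgroup G} [M.Normal] {g : G} {m : ℕ} (hm : 0 < m)
    (hg : ∀ x : G, ∃ n : ℤ, x * (g ^ n)⁻¹ ∈ M) (hgm : g ^ m ∈ M) : M.index ≤ m := by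
  have hgen : zpowers (g : G ⧸ M) = ⊤ := by
    refine eq_top_iff.mpr fun y _ => ?_
    obtain ⟨x, rfl⟩ := QuotientGroup.mk_surjective y
    obtain ⟨n, hn⟩ := hg x
    refine mem_zpowers_iff.mpr ⟨n, ?_⟩
    rw [← QuotientGroup.mk_zpow, QuotientGroup.eq_iff_div_mem, div_eq_mul_inv]
    simpa using inv_mem hn
  have horder : ((g : G ⧸ M)) ^ m = 1 := by
    rwa [← QuotientGroup.mk_pow, QuotientGroup.eq_one_iff]
  calc M.index = Nat.card (zpowers (g : G ⧸ M)) := by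
        rw [index_eq_card, hgen, card_top]
    _ = orderOf (g : G ⧸ M) := Nat.card_zpowers _
    _ ≤ m := orderOf_le_of_pow_eq_one hm horder

theorem index_le_relIndex_mul_of_zpow_generates {A B : Subgroup G} [A.Normal] [B.Normal]
    {g : G} {m : ℕ} (hm : 0 < m) (hg : ∀ x : G, ∃ n : ℤ, x * (g ^ n)⁻¹ ∈ B) (hgm : g ^ m ∈ A) :
    A.index ≤ A.relIndex B * m := by
  have hsup : (B ⊔ A).index ≤ m :=
    index_le_of_zpow_generates hm (fun x => (hg x).imp fun _ hn => mem_sup_left hn)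
      (mem_sup_right hgm)
  calc A.index = A.relIndex (B ⊔ A) * (B ⊔ A).index := (relIndex_mul_index le_sup_right).symm
    _ = A.relIndex B * (B ⊔ A).index := by rw [relIndex_sup_right]
    _ ≤ A.relIndex B * m := Nat.mul_le_mul_left _ hsup

theorem relIndex_le_pow_of_cyclic_series {N : Subgroup G} [N.Normal] {m : ℕ} (hm : 0 < m)
    (hN : ∀ g : G, g ^ m ∈ N) {d : ℕ} (H : Fin (d + 1) → Subgroup G) (h0 : H 0 = ⊥)
    (hle : ∀ i : Fin d, H i.castSucc ≤ H i.succ)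
    (hnorm : ∀ i : Fin d, ((H i.castSucc).subgroupOf (H i.succ)).Normal)
    (hgen : ∀ i : Fin d, ∃ g ∈ H i.succ, ∀ x ∈ H i.succ, ∃ n : ℤ, x * (g ^ n)⁻¹ ∈ H i.castSucc)
    (i : Fin (d + 1)) : N.relIndex (H i) ≤ m ^ (i : ℕ) := by
  induction i using Fin.induction with
  | zero => simp [h0, relIndex_bot_right]
  | succ i ih =>
    obtain ⟨g, hgH, hg⟩ := hgen i
    have := hnorm i
    have hstep : N.relIndex (H i.succ) ≤ N.relIndex (H i.castSucc) * m := by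
      rw [← relIndex_subgroupOf (hle i)]
      refine index_le_relIndex_mul_of_zpow_generates (g := ⟨g, hgH⟩) hm
        (fun ⟨x, hx⟩ => (hg x hx).imp fun _ hn => ?_) (mem_subgroupOf.mpr (hN g))
      simpa [mem_subgroupOf] using hn
    calc N.relIndex (H i.succ) ≤ N.relIndex (H i.castSucc) * m := hstep
      _ ≤ m ^ (i : ℕ) * m := Nat.mul_le_mul_right _ ih
      _ = m ^ (i.succ : ℕ) := by rw [Fin.val_succ, pow_succ]

end Subgroup

theorem index_pow_subgroup_le_pow_hirsch_length_general (Γ : Type*) [Group Γ]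
    (d m : ℕ) (hm : 0 < m)
    (H : Fin (d + 1) → Subgroup Γ)
    (h0 : H 0 = ⊥) (htop : H (Fin.last d) = ⊤)
    (hle : ∀ i : Fin d, H i.castSucc ≤ H i.succ)
    (hnorm : ∀ i : Fin d, ((H i.castSucc).subgroupOf (H i.succ)).Normal)
    (hcyc : ∀ i : Fin d, ∃ g ∈ H i.succ,
      (∀ x ∈ H i.succ, ∃ n : ℤ, x * (g ^ n)⁻¹ ∈ H i.castSucc) ∧
      (∀ n : ℤ, g ^ n ∈ H i.castSucc → n = 0)) :
    (Subgroup.closure {x : Γ | ∃ g : Γ, x = g ^ m}).index ≤ m ^ d := by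
  have := Subgroup.closure_pow_normal (G := Γ) m
  have hseries := Subgroup.relIndex_le_pow_of_cyclic_series hm
    (N := Subgroup.closure {x : Γ | ∃ g : Γ, x = g ^ m}) (fun g => Subgroup.subset_closure ⟨g, rfl⟩) H h0 hle hnorm
    (fun i => (hcyc i).imp fun _ ⟨hgH, hg, _⟩ => ⟨hgH, hg⟩) (Fin.last d)
  rwa [htop, Subgroup.relIndex_top_right, Fin.val_last] at hseries

/-- Let `Γ` be a finitely generated (torsion-free) nilpotent group of Hirsch
length `d`, witnessed by a subnormal series `⊥ = H 0 ≤ H 1 ≤ ⋯ ≤ H d = ⊤` in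
which each successive quotient is infinite cyclic. Then for every `m > 0` the
subgroup `Γ^m` generated by all `m`-th powers has index at most `m^d`. -/
theorem index_pow_subgroup_le_pow_hirsch_length (Γ : Type*) [Group Γ]
    [Group.IsNilpotent Γ] (hfg : Group.FG Γ) (d m : ℕ) (hm : 0 < m)
    (H : Fin (d + 1) → Subgroup Γ)
    (h0 : H 0 = ⊥) (htop : H (Fin.last d) = ⊤)
    (hle : ∀ i : Fin d, H i.castSucc ≤ H i.succ)
    (hnorm : ∀ i : Fin d, ((H i.castSucc).subgroupOf (H i.succ)).Normal)
    (hcyc : ∀ i : Fin d, ∃ g ∈ H i.succ,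
      (∀ x ∈ H i.succ, ∃ n : ℤ, x * (g ^ n)⁻¹ ∈ H i.castSucc) ∧
      (∀ n : ℤ, g ^ n ∈ H i.castSucc → n = 0)) :
    (Subgroup.closure {x : Γ | ∃ g : Γ, x = g ^ m}).index ≤ m ^ d :=
  index_pow_subgroup_le_pow_hirsch_length_general Γ d m hm H h0 htop hle hnorm hcyc
end

section
/- Let Γ be a torsion-free finitely generated nilpotent group of nilpotency class c, viewed as the integer points of a unipotent algebraic group with rational points Γ ⊗ ℚ (the rational Mal'cev completion). If Δ is the subgroup generated by all elements g of the Mal'cev completion with g^{p^k} ∈ Γ, then Δ^{p^{kc(c+1)/2}} ≤ Γ. -/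
/-!
Write `γ n` for the lower central series, `γ 0 = G`, and suppose `G` is generated by elements
whose `m`-th powers lie in `H` (for the theorem: `G = Δ`, `H = Γ ∩ Δ`, `m = p ^ k`). If
`γ (c + 1) = 1` then `γ c` is central and we argue in `G ⧸ γ c`, which has class `≤ c` and the same
generation property. By induction there, `g ^ m ^ (c (c + 1) / 2) = h w` with `h ∈ H` and `w ∈ γ c`
central, so `g ^ m ^ ((c + 1) (c + 2) / 2) = h ^ m ^ (c + 1) * w ^ m ^ (c + 1)` and it remains to
see `w ^ m ^ (c + 1) ∈ H` for `w ∈ γ c`.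

For this, `γ c` is central and generated by commutators `⁅x, y⁆` with `x ∈ γ (c - 1)`; for such `x`,
`y ↦ ⁅x, y⁆` is a homomorphism into the centre, so it suffices to treat `y = t` with `t ^ m ∈ H`.
Bilinearity gives `⁅x, t⁆ ^ m ^ (c + 1) = ⁅x ^ m ^ c, t ^ m⁆`, and the same induction in
`G ⧸ γ c` writes `x ^ m ^ c = h w` with `w` central, so this commutator is `⁅h, t ^ m⁆ ∈ H`.
-/

open Subgroup QuotientGroup
open scoped commutatorElement

section Commutator

variable {G : Type*} [Group G] {x y z : G}

theorem commutatorElement_mul_right_of_commute (h : Commute y ⁅x, z⁆) :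
    ⁅x, y * z⁆ = ⁅x, y⁆ * ⁅x, z⁆ := by
  rw [commutatorElement_mul_right_eq_mul_conj, mul_assoc _ y, h.eq, ← mul_assoc,
    mul_inv_cancel_right]

theorem commutatorElement_mul_left_of_commute (h : Commute x ⁅y, z⁆) :
    ⁅x * y, z⁆ = ⁅y, z⁆ * ⁅x, z⁆ := by
  rw [commutatorElement_mul_left_eq_conj_mul, h.eq, mul_inv_cancel_right]

theorem commutatorElement_pow_right (h : Commute y ⁅x, y⁆) (n : ℕ) :
    ⁅x, y ^ n⁆ = ⁅x, y⁆ ^ n := by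
  induction n with
  | zero => simp
  | succ n ih =>
    rw [pow_succ', commutatorElement_mul_right_of_commute (ih ▸ h.pow_right n), ih, pow_succ']

theorem commutatorElement_pow_left (h : Commute x ⁅x, y⁆) (n : ℕ) :
    ⁅x ^ n, y⁆ = ⁅x, y⁆ ^ n := by
  induction n with
  | zero => simp
  | succ n ih =>
    rw [pow_succ', commutatorElement_mul_left_of_commute (ih ▸ h.pow_right n), ih, pow_succ]

theorem commutatorElement_mul_left_of_mem_center (hy : y ∈ center G) :
    ⁅x * y, z⁆ = ⁅x, z⁆ := by
  have hyz : ⁅y, z⁆ = 1 := commutatorElement_eq_one_iff_commute.mpr (hy.comm z)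
  rw [commutatorElement_mul_left_eq_conj_mul, hyz, mul_one, mul_inv_cancel, one_mul]

end Commutator

namespace Subgroup

section Quotient

variable {G G' : Type*} [Group G] [Group G']

theorem map_top_lowerCentralSeries_of_surjective {f : G →* G'} (hf : Function.Surjective f)
    (n : ℕ) :
    ((⊤ : Subgroup G).lowerCentralSeries n).map f = (⊤ : Subgroup G').lowerCentralSeries n := by
  rw [map_lowerCentralSeries, map_top_of_surjective f hf]

theorem top_lowerCentralSeries_quotient_eq_bot (n : ℕ) :
    (⊤ : Subgroup (G ⧸ (⊤ : Subgroup G).lowerCentralSeries n)).lowerCentralSeries n = ⊥ := by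
  rw [← map_top_lowerCentralSeries_of_surjective (mk'_surjective _), Subgroup.map_eq_bot_iff,
    ker_mk']

theorem lowerCentralSeries_le_center_of_succ_eq_bot {n : ℕ}
    (h : (⊤ : Subgroup G).lowerCentralSeries (n + 1) = ⊥) :
    (⊤ : Subgroup G).lowerCentralSeries n ≤ center G := by
  rw [← centralizer_univ, ← coe_top]
  exact commutator_eq_bot_iff_le_centralizer.mp h

theorem exists_mul_eq_of_mk'_mem_map {H N : Subgroup G} [N.Normal] {g : G}
    (h : mk' N g ∈ H.map (mk' N)) : ∃ a ∈ H, ∃ b ∈ N, a * b = g := by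
  rw [← mem_sup_of_normal_right, ← ker_mk' N, ← comap_map_eq]
  exact h

theorem closure_pow_mem_map_eq_top {f : G →* G'} (hf : Function.Surjective f) {H : Subgroup G}
    {n : ℕ} (h : Subgroup.closure {g | g ^ n ∈ H} = ⊤) :
    Subgroup.closure {g' | g' ^ n ∈ H.map f} = ⊤ := by
  rw [eq_top_iff, ← map_top_of_surjective f hf, ← h, MonoidHom.map_closure]
  refine closure_mono ?_
  rintro _ ⟨g, hg, rfl⟩
  show f g ^ n ∈ H.map f
  rw [← map_pow]
  exact mem_map_of_mem f hg

end Quotient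

section Powers

variable {G : Type*} [Group G] {H : Subgroup G} {n : ℕ}

theorem pow_mem_of_mem_closure_of_subset_center {S : Set G} (hS : S ⊆ center G)
    (h : ∀ s ∈ S, s ^ n ∈ H) {g : G} (hg : g ∈ Subgroup.closure S) : g ^ n ∈ H := by
  have hcen : Subgroup.closure S ≤ center G := (closure_le _).mpr hS
  induction hg using closure_induction with
  | mem s hs => exact h s hs
  | one => simp
  | mul a b _ hb iha ihb =>
    rw [((hcen hb).comm a).symm.mul_pow]
    exact mul_mem iha ihb
  | inv a _ iha => rw [inv_pow]; exact inv_mem iha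

theorem commutatorElement_pow_mem_of_closure_eq_top {x : G} (hx : ∀ y, ⁅x, y⁆ ∈ center G)
    {S : Set G} (hS : Subgroup.closure S = ⊤) (h : ∀ s ∈ S, ⁅x, s⁆ ^ n ∈ H) (y : G) :
    ⁅x, y⁆ ^ n ∈ H := by
  let f : G →* G := MonoidHom.mk' (fun y ↦ ⁅x, y⁆ ^ n) fun a b ↦ by
    rw [commutatorElement_mul_right_of_commute ((hx b).comm a).symm,
      ((hx b).comm ⁅x, a⁆).symm.mul_pow]
  exact (closure_le (H.comap f)).mpr h (hS ▸ mem_top y)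

end Powers

end Subgroup

section RootGenerated

variable {G : Type*} [Group G] {H : Subgroup G} {m : ℕ}

theorem pow_mem_of_mem_lowerCentralSeries (hgen : Subgroup.closure {g | g ^ m ∈ H} = ⊤) (c : ℕ)
    (hc : (⊤ : Subgroup G).lowerCentralSeries (c + 1) = ⊥) {z : G}
    (hz : z ∈ (⊤ : Subgroup G).lowerCentralSeries c) : z ^ m ^ (c + 1) ∈ H := by
  induction c generalizing G with
  | zero =>
    rw [zero_add, pow_one]
    exact pow_mem_of_mem_closure_of_subset_center
      (fun g _ ↦ lowerCentralSeries_le_center_of_succ_eq_bot hc (mem_top g))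
      (fun _ hg ↦ hg) (hgen ▸ mem_top z)
  | succ c ih =>
    set N := (⊤ : Subgroup G).lowerCentralSeries (c + 1)
    have hcen : N ≤ center G := lowerCentralSeries_le_center_of_succ_eq_bot hc
    have hx_cen : ∀ x ∈ (⊤ : Subgroup G).lowerCentralSeries c, ∀ y, ⁅x, y⁆ ∈ center G :=
      fun x hx y ↦ hcen (commutator_mem_commutator hx (mem_top y))
    refine pow_mem_of_mem_closure_of_subset_center ?_ ?_ hz
    · rintro _ ⟨x, hx, y, -, rfl⟩
      exact hx_cen x hx y
    rintro _ ⟨x, hx, y, -, rfl⟩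
    refine commutatorElement_pow_mem_of_closure_eq_top (hx_cen x hx) hgen (fun t ht ↦ ?_) y
    obtain ⟨a, ha, b, hb, hab⟩ : ∃ a ∈ H, ∃ b ∈ N, a * b = x ^ m ^ (c + 1) := by
      refine exists_mul_eq_of_mk'_mem_map ?_
      rw [map_pow]
      refine ih (closure_pow_mem_map_eq_top (mk'_surjective N) hgen)
        (top_lowerCentralSeries_quotient_eq_bot (c + 1)) ?_
      rw [← map_top_lowerCentralSeries_of_surjective (mk'_surjective N)]
      exact mem_map_of_mem _ hx
    have hxM : x ^ m ^ (c + 1) ∈ (⊤ : Subgroup G).lowerCentralSeries c := pow_mem hx _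
    have hcomm : ⁅x, t⁆ ^ m ^ (c + 1 + 1) = ⁅a, t ^ m⁆ := by
      rw [← commutatorElement_mul_left_of_mem_center (x := a) (hcen hb), hab,
        commutatorElement_pow_right ((hx_cen _ hxM t).comm t).symm,
        commutatorElement_pow_left ((hx_cen x hx t).comm x).symm, ← pow_mul, ← pow_succ]
    rw [hcomm, commutatorElement_def]
    exact mul_mem (mul_mem (mul_mem ha ht) (inv_mem ha)) (inv_mem ht)

theorem pow_mem_of_closure_pow_mem_eq_top (hgen : Subgroup.closure {g | g ^ m ∈ H} = ⊤) (c : ℕ)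
    (hc : (⊤ : Subgroup G).lowerCentralSeries c = ⊥) (g : G) :
    g ^ m ^ (c * (c + 1) / 2) ∈ H := by
  induction c generalizing G with
  | zero =>
    have hg : g ∈ (⊥ : Subgroup G) := by rw [← hc]; exact mem_top g
    rw [mem_bot.mp hg, one_pow]
    exact one_mem H
  | succ c ih =>
    set N := (⊤ : Subgroup G).lowerCentralSeries c
    obtain ⟨a, ha, b, hb, hab⟩ : ∃ a ∈ H, ∃ b ∈ N, a * b = g ^ m ^ (c * (c + 1) / 2) := by
      refine exists_mul_eq_of_mk'_mem_map ?_
      rw [map_pow]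
      exact ih (closure_pow_mem_map_eq_top (mk'_surjective N) hgen)
        (top_lowerCentralSeries_quotient_eq_bot c) _
    have hexp : (c + 1) * (c + 1 + 1) / 2 = c * (c + 1) / 2 + (c + 1) := by
      rw [show (c + 1) * (c + 1 + 1) = c * (c + 1) + 2 * (c + 1) by ring,
        Nat.add_mul_div_left _ _ two_pos]
    rw [hexp, pow_add, pow_mul, ← hab,
      ((lowerCentralSeries_le_center_of_succ_eq_bot hc hb).comm a).symm.mul_pow]
    exact mul_mem (pow_mem ha _) (pow_mem_of_mem_lowerCentralSeries hgen c hc hb)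

end RootGenerated

theorem roots_pow_le_general (Q : Type*) [Group Q] [Group.IsNilpotent Q] (c p k : ℕ)
    (hclass : Group.nilpotencyClass Q = c)
    (Γ : Subgroup Q) :
    Subgroup.closure {x : Q | ∃ d ∈ Subgroup.closure {g : Q | g ^ p ^ k ∈ Γ},
        x = d ^ p ^ (k * (c * (c + 1) / 2))} ≤ Γ := by
  set Δ := Subgroup.closure {g : Q | g ^ p ^ k ∈ Γ}
  have hΔ : (⊤ : Subgroup Δ).lowerCentralSeries c = ⊥ :=
    Subgroup.lowerCentralSeries_eq_bot_iff_nilpotencyClass_le.mpr (hclass ▸ Δ.nilpotencyClass_le)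
  have hgen : Subgroup.closure {g : Δ | g ^ p ^ k ∈ Γ.subgroupOf Δ} = ⊤ :=
    closure_closure_coe_preimage
  refine (closure_le Γ).mpr ?_
  rintro _ ⟨d, hd, rfl⟩
  have hd_pow := pow_mem_of_closure_pow_mem_eq_top hgen c hΔ ⟨d, hd⟩
  rwa [mem_subgroupOf, SubmonoidClass.coe_pow, ← pow_mul] at hd_pow

/-- Let `Γ` be a torsion-free finitely generated nilpotent group of class `c`,
embedded in its rational Mal'cev completion `Q` (a torsion-free divisible
nilpotent group of class `c` in which every element has a positive power lying
in `Γ`). If `Δ` is the subgroup generated by all `g ∈ Q` with `g^{p^k} ∈ Γ`,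
then `Δ^{p^{k c(c+1)/2}} ≤ Γ`. -/
theorem roots_pow_le (Q : Type*) [Group Q] [Group.IsNilpotent Q] (c p k : ℕ)
    (hp : p.Prime) (hclass : Group.nilpotencyClass Q = c)
    (Γ : Subgroup Q) (hfg : Γ.FG)
    (htf : ∀ q : Q, ∀ n : ℕ, 0 < n → q ^ n = 1 → q = 1)
    (hdiv : ∀ q : Q, ∀ n : ℕ, 0 < n → ∃ r : Q, r ^ n = q)
    (hroot : ∀ q : Q, ∃ n : ℕ, 0 < n ∧ q ^ n ∈ Γ) :
    Subgroup.closure {x : Q | ∃ d ∈ Subgroup.closure {g : Q | g ^ p ^ k ∈ Γ},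
        x = d ^ p ^ (k * (c * (c + 1) / 2))} ≤ Γ :=
  roots_pow_le_general Q c p k hclass Γ
end

section
/- In the Heisenberg group H(ℝ) of upper unitriangular 3×3 real matrices, if Δ is a subgroup commensurable with H(ℤ), then every element of Δ has all entries rational, i.e., Δ ≤ H(ℚ). -/
/-- The Heisenberg group over a commutative ring `R`: upper unitriangular 3×3
matrices, recorded by their off-diagonal entries `x` (entry (1,2)),
`y` (entry (2,3)) and `z` (entry (1,3)). -/
@[ext]
structure Heis (R : Type*) where
  x : R
  y : R
  z : R

namespace Heis

variable {R : Type*} [CommRing R]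

instance : Mul (Heis R) := ⟨fun a b => ⟨a.x + b.x, a.y + b.y, a.z + b.z + a.x * b.y⟩⟩
instance : One (Heis R) := ⟨⟨0, 0, 0⟩⟩
instance : Inv (Heis R) := ⟨fun a => ⟨-a.x, -a.y, -a.z + a.x * a.y⟩⟩

@[simp] theorem mul_x (a b : Heis R) : (a * b).x = a.x + b.x := rfl
@[simp] theorem mul_y (a b : Heis R) : (a * b).y = a.y + b.y := rfl
@[simp] theorem mul_z (a b : Heis R) : (a * b).z = a.z + b.z + a.x * b.y := rfl
@[simp] theorem one_x : (1 : Heis R).x = 0 := rfl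
@[simp] theorem one_y : (1 : Heis R).y = 0 := rfl
@[simp] theorem one_z : (1 : Heis R).z = 0 := rfl
@[simp] theorem inv_x (a : Heis R) : a⁻¹.x = -a.x := rfl
@[simp] theorem inv_y (a : Heis R) : a⁻¹.y = -a.y := rfl
@[simp] theorem inv_z (a : Heis R) : a⁻¹.z = -a.z + a.x * a.y := rfl

instance : Group (Heis R) where
  mul_assoc a b c := by ext <;> simp <;> ring
  one_mul a := by ext <;> simp
  mul_one a := by ext <;> simp
  inv_mul_cancel a := by ext <;> simp

end Heis

/-- The integral Heisenberg lattice `H(ℤ)` inside `H(ℝ)`. -/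
def HeisZ : Subgroup (Heis ℝ) where
  carrier := {a | (∃ m : ℤ, (m : ℝ) = a.x) ∧ (∃ m : ℤ, (m : ℝ) = a.y) ∧
    ∃ m : ℤ, (m : ℝ) = a.z}
  one_mem' := ⟨⟨0, by simp⟩, ⟨0, by simp⟩, ⟨0, by simp⟩⟩
  mul_mem' := by
    rintro a b ⟨⟨ax, hax⟩, ⟨ay, hay⟩, ⟨az, haz⟩⟩ ⟨⟨bx, hbx⟩, ⟨by', hby⟩, ⟨bz, hbz⟩⟩
    exact ⟨⟨ax + bx, by push_cast; rw [hax, hbx]; simp⟩,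
      ⟨ay + by', by push_cast; rw [hay, hby]; simp⟩,
      ⟨az + bz + ax * by', by push_cast; rw [haz, hbz, hax, hby]; simp⟩⟩
  inv_mem' := by
    rintro a ⟨⟨ax, hax⟩, ⟨ay, hay⟩, ⟨az, haz⟩⟩
    exact ⟨⟨-ax, by push_cast; rw [hax]; simp⟩, ⟨-ay, by push_cast; rw [hay]; simp⟩,
      ⟨-az + ax * ay, by push_cast; rw [haz, hax, hay]; simp⟩⟩
/-!
Since `H(ℤ) ∩ Δ` has finite index in `Δ`, every `a ∈ Δ` has a power `a ^ n`, `n > 0`,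
in `H(ℤ)`. The entries of `a ^ n` are `n x`, `n y` and `n z + (n choose 2) x y`; solving
successively for `x`, `y` and `z` shows that they lie in any subfield (of a field of
characteristic zero) containing those of `a ^ n`.
-/

namespace Heis

section CommRing

variable {R : Type*} [CommRing R]

@[simp]
theorem pow_x (a : Heis R) (n : ℕ) : (a ^ n).x = n * a.x := by
  induction n with
  | zero => simp
  | succ k ih => rw [pow_succ, mul_x, ih]; push_cast; ring

@[simp]
theorem pow_y (a : Heis R) (n : ℕ) : (a ^ n).y = n * a.y := by
  induction n with
  | zero => simp
  | succ k ih => rw [pow_succ, mul_y, ih]; push_cast; ring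

@[simp]
theorem pow_z (a : Heis R) (n : ℕ) : (a ^ n).z = n * a.z + n.choose 2 * (a.x * a.y) := by
  induction n with
  | zero => simp
  | succ k ih =>
    rw [pow_succ, mul_z, ih, pow_x, Nat.choose_succ_succ', Nat.choose_one_right]
    push_cast
    ring

def points (S : Subring R) : Subgroup (Heis R) where
  carrier := {a | a.x ∈ S ∧ a.y ∈ S ∧ a.z ∈ S}
  one_mem' := ⟨S.zero_mem, S.zero_mem, S.zero_mem⟩
  mul_mem' := fun ⟨hax, hay, haz⟩ ⟨hbx, hby, hbz⟩ =>
    ⟨S.add_mem hax hbx, S.add_mem hay hby, S.add_mem (S.add_mem haz hbz) (S.mul_mem hax hby)⟩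
  inv_mem' := fun ⟨hx, hy, hz⟩ =>
    ⟨S.neg_mem hx, S.neg_mem hy, S.add_mem (S.neg_mem hz) (S.mul_mem hx hy)⟩

end CommRing

theorem mem_points_of_pow_mem {K : Type*} [Field K] [CharZero K] {F : Subfield K} {a : Heis K}
    {n : ℕ} (hn : n ≠ 0) (h : a ^ n ∈ points F.toSubring) : a ∈ points F.toSubring := by
  obtain ⟨hx, hy, hz⟩ := h
  have hn' : (n : K) ≠ 0 := Nat.cast_ne_zero.mpr hn
  have hnF : (n : K) ∈ F := natCast_mem F n
  have hax : a.x ∈ F := by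
    have : a.x = (a ^ n).x / n := by rw [pow_x]; field_simp
    exact this ▸ F.div_mem hx hnF
  have hay : a.y ∈ F := by
    have : a.y = (a ^ n).y / n := by rw [pow_y]; field_simp
    exact this ▸ F.div_mem hy hnF
  refine ⟨hax, hay, ?_⟩
  have : a.z = ((a ^ n).z - n.choose 2 * (a.x * a.y)) / n := by rw [pow_z]; field_simp; ring
  exact this ▸ F.div_mem (F.sub_mem hz (F.mul_mem (natCast_mem F _) (F.mul_mem hax hay))) hnF

end Heis

theorem heisZ_le_points_rat : HeisZ ≤ Heis.points (algebraMap ℚ ℝ).fieldRange.toSubring :=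
  fun _ ⟨⟨mx, hx⟩, ⟨my, hy⟩, ⟨mz, hz⟩⟩ =>
    ⟨⟨mx, by simpa using hx⟩, ⟨my, by simpa using hy⟩, ⟨mz, by simpa using hz⟩⟩

theorem heisenberg_commensurable_subgroup_rational_general (Δ : Subgroup (Heis ℝ))
    (h2 : Subgroup.relIndex HeisZ Δ ≠ 0) :
    ∀ a ∈ Δ, (∃ q : ℚ, (q : ℝ) = a.x) ∧ (∃ q : ℚ, (q : ℝ) = a.y) ∧
      ∃ q : ℚ, (q : ℝ) = a.z := by
  intro a ha
  obtain ⟨n, hn, -, hpow⟩ := Subgroup.exists_pow_mem_of_relIndex_ne_zero h2 ha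
  exact Heis.mem_points_of_pow_mem hn.ne' (heisZ_le_points_rat hpow.1)

/-- In the Heisenberg group `H(ℝ)`, every subgroup `Δ` commensurable with
`H(ℤ)` satisfies `Δ ≤ H(ℚ)`: all entries of all elements of `Δ` are rational. -/
theorem heisenberg_commensurable_subgroup_rational (Δ : Subgroup (Heis ℝ))
    (h1 : Subgroup.relIndex Δ HeisZ ≠ 0) (h2 : Subgroup.relIndex HeisZ Δ ≠ 0) :
    ∀ a ∈ Δ, (∃ q : ℚ, (q : ℝ) = a.x) ∧ (∃ q : ℚ, (q : ℝ) = a.y) ∧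
      ∃ q : ℚ, (q : ℝ) = a.z :=
  heisenberg_commensurable_subgroup_rational_general Δ h2
end

section
/- Every finite-index subgroup of the Heisenberg group H(ℤ) contains the congruence subgroup H(mℤ) = ker(H(ℤ) → H(ℤ/mℤ)) for some positive integer m; in particular, if [H(ℤ) : Δ] = n then H(ℤ)^{n} generated by n-th powers is contained in Δ, and more precisely the subgroup of matrices with off-diagonal entries in n²ℤ lies in Δ. -/
/-- Entrywise reduction homomorphism between Heisenberg groups. -/
def heisMap {R S : Type*} [CommRing R] [CommRing S] (f : R →+* S) :
    Heis R →* Heis S where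
  toFun a := ⟨f a.x, f a.y, f a.z⟩
  map_one' := by ext <;> simp
  map_mul' a b := by ext <;> simp

namespace Heis
open Pointwise

lemma xpow (t : ℤ) : ∀ k : ℕ, (⟨t, 0, 0⟩ : Heis ℤ) ^ k = ⟨(k : ℤ) * t, 0, 0⟩
  | 0 => by ext <;> simp
  | k + 1 => by rw [pow_succ, xpow t k]; ext <;> simp <;> push_cast <;> ring

lemma ypow (t : ℤ) : ∀ k : ℕ, (⟨0, t, 0⟩ : Heis ℤ) ^ k = ⟨0, (k : ℤ) * t, 0⟩
  | 0 => by ext <;> simp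
  | k + 1 => by rw [pow_succ, ypow t k]; ext <;> simp <;> push_cast <;> ring

lemma zpow' (t : ℤ) : ∀ k : ℕ, (⟨0, 0, t⟩ : Heis ℤ) ^ k = ⟨0, 0, (k : ℤ) * t⟩
  | 0 => by ext <;> simp
  | k + 1 => by rw [pow_succ, zpow' t k]; ext <;> simp <;> push_cast <;> ring

lemma mem_center' (z : ℤ) : (⟨0, 0, z⟩ : Heis ℤ) ∈ Subgroup.center (Heis ℤ) := by
  rw [Subgroup.mem_center_iff]
  intro b
  ext <;> simp <;> ring

/-- Key lemma: a subgroup of index `n` in `H(ℤ)` contains all `n`-th powers. -/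
theorem pow_index_mem_heis (Δ : Subgroup (Heis ℤ)) (n : ℕ) (hn : 0 < n)
    (hidx : Δ.index = n) (g : Heis ℤ) : g ^ n ∈ Δ := by
  set C := Subgroup.center (Heis ℤ) with hC
  set N := Δ ⊔ C with hN
  have hΔN : Δ ≤ N := le_sup_left
  have hCN : C ≤ N := le_sup_right
  have hNnormal : N.Normal := by
    constructor
    intro h hh g
    have key : g * h * g⁻¹ = h * ⟨0, 0, g.x * h.y - h.x * g.y⟩ := by
      ext <;> simp <;> ring
    rw [key]
    exact N.mul_mem hh (hCN (mem_center' _))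
  have hmulN : ((N : Set (Heis ℤ))) = (↑Δ : Set (Heis ℤ)) * (↑C : Set (Heis ℤ)) := Subgroup.mul_normal Δ C
  -- decompose g ^ N.index
  have hg1 : g ^ N.index ∈ (↑Δ * ↑C : Set (Heis ℤ)) := by
    rw [← hmulN]; exact Subgroup.pow_index_mem N g
  obtain ⟨δ, hδ, u, hu, hgu'⟩ := hg1
  have hgu : δ * u = g ^ N.index := hgu'
  have hrel : Δ.relIndex N * N.index = n := by rw [Subgroup.relIndex_mul_index hΔN, hidx]
  -- Δ is normal in N
  have hΔ'normal : (Δ.subgroupOf N).Normal := by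
    constructor
    intro x hx ν
    rw [Subgroup.mem_subgroupOf] at hx ⊢
    have hν : (ν : Heis ℤ) ∈ (↑Δ * ↑C : Set (Heis ℤ)) := by rw [← hmulN]; exact ν.2
    obtain ⟨δ', hδ', u', hu', hν''⟩ := hν
    have hν' : δ' * u' = (ν : Heis ℤ) := hν''
    have hcoe : ((ν * x * ν⁻¹ : N) : Heis ℤ) = (ν : Heis ℤ) * (x : Heis ℤ) * (ν : Heis ℤ)⁻¹ := by
      push_cast; ring_nf
    rw [hcoe, ← hν']
    have hcomm : ∀ b : Heis ℤ, b * u' = u' * b := Subgroup.mem_center_iff.mp hu'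
    have hfix : u' * (x : Heis ℤ) * u'⁻¹ = (x : Heis ℤ) := by
      rw [← hcomm (x : Heis ℤ), mul_inv_cancel_right]
    have hconj : δ' * u' * (x : Heis ℤ) * (δ' * u')⁻¹ =
        δ' * (u' * (x : Heis ℤ) * u'⁻¹) * δ'⁻¹ := by group
    rw [hconj, hfix]
    exact Δ.mul_mem (Δ.mul_mem hδ' hx) (Δ.inv_mem hδ')
  -- u ^ relindex ∈ Δ
  have huN : u ∈ N := hCN hu
  have h3 : (⟨u, huN⟩ : N) ^ (Δ.subgroupOf N).index ∈ Δ.subgroupOf N :=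
    Subgroup.pow_index_mem _ _
  rw [Subgroup.mem_subgroupOf] at h3
  have h4 : u ^ Δ.relIndex N ∈ Δ := by
    have : ((⟨u, huN⟩ ^ (Δ.subgroupOf N).index : N) : Heis ℤ) = u ^ Δ.relIndex N := by
      push_cast; rfl
    rwa [this] at h3
  -- conclude
  have hcommδu : Commute δ u := (Subgroup.mem_center_iff.mp hu δ)
  have : g ^ n = δ ^ Δ.relIndex N * u ^ Δ.relIndex N := by
    rw [← hcommδu.mul_pow, hgu, ← pow_mul, mul_comm, hrel]
  rw [this]
  exact Δ.mul_mem (Δ.pow_mem hδ _) h4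

end Heis

theorem heis_ker_le (Δ : Subgroup (Heis ℤ)) (n : ℕ) (hn : 0 < n)
    (hidx : Δ.index = n) : (heisMap (Int.castRingHom (ZMod (n ^ 2)))).ker ≤ Δ := by
  intro g hg
  rw [MonoidHom.mem_ker] at hg
  have hx : ((n : ℤ) ^ 2) ∣ g.x := by
    have h0 : ((g.x : ℤ) : ZMod (n ^ 2)) = 0 := congrArg Heis.x hg
    rw [ZMod.intCast_zmod_eq_zero_iff_dvd] at h0
    exact_mod_cast h0
  have hy : ((n : ℤ) ^ 2) ∣ g.y := by
    have h0 : ((g.y : ℤ) : ZMod (n ^ 2)) = 0 := congrArg Heis.y hg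
    rw [ZMod.intCast_zmod_eq_zero_iff_dvd] at h0
    exact_mod_cast h0
  have hz : ((n : ℤ) ^ 2) ∣ g.z := by
    have h0 : ((g.z : ℤ) : ZMod (n ^ 2)) = 0 := congrArg Heis.z hg
    rw [ZMod.intCast_zmod_eq_zero_iff_dvd] at h0
    exact_mod_cast h0
  obtain ⟨w', hw'⟩ : ((n : ℤ) ^ 2) ∣ g.z - g.x * g.y :=
    dvd_sub hz (Dvd.dvd.mul_right hx g.y)
  obtain ⟨x', hx'⟩ := hx
  obtain ⟨y', hy'⟩ := hy
  have hdecomp : g = (⟨g.x, 0, 0⟩ : Heis ℤ) * ⟨0, g.y, 0⟩ * ⟨0, 0, g.z - g.x * g.y⟩ := by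
    ext <;> simp <;> ring
  rw [hdecomp]
  have h1 : (⟨g.x, 0, 0⟩ : Heis ℤ) ∈ Δ := by
    have heq : (⟨(n : ℤ) * x', 0, 0⟩ : Heis ℤ) ^ n = ⟨g.x, 0, 0⟩ := by
      rw [Heis.xpow]
      ext <;> simp [hx'] <;> ring
    exact heq ▸ Heis.pow_index_mem_heis Δ n hn hidx _
  have h2 : (⟨0, g.y, 0⟩ : Heis ℤ) ∈ Δ := by
    have heq : (⟨0, (n : ℤ) * y', 0⟩ : Heis ℤ) ^ n = ⟨0, g.y, 0⟩ := by
      rw [Heis.ypow]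
      ext <;> simp [hy'] <;> ring
    exact heq ▸ Heis.pow_index_mem_heis Δ n hn hidx _
  have h3 : (⟨0, 0, g.z - g.x * g.y⟩ : Heis ℤ) ∈ Δ := by
    have heq : (⟨0, 0, (n : ℤ) * w'⟩ : Heis ℤ) ^ n = ⟨0, 0, g.z - g.x * g.y⟩ := by
      rw [Heis.zpow']
      ext <;> simp [hw'] <;> ring
    exact heq ▸ Heis.pow_index_mem_heis Δ n hn hidx _
  exact Δ.mul_mem (Δ.mul_mem h1 h2) h3

/-- Every finite-index subgroup `Δ` of the integral Heisenberg group `H(ℤ)`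
contains a congruence subgroup `H(mℤ) = ker(H(ℤ) → H(ℤ/mℤ))` for some `m > 0`;
in particular, if `[H(ℤ) : Δ] = n` then the subgroup generated by `n`-th powers
is contained in `Δ`, and more precisely `H(n²ℤ) ≤ Δ`. -/
theorem heisenberg_congruence_subgroup (Δ : Subgroup (Heis ℤ)) (n : ℕ)
    (hn : 0 < n) (hidx : Δ.index = n) :
    (∃ m : ℕ, 0 < m ∧ (heisMap (Int.castRingHom (ZMod m))).ker ≤ Δ) ∧
      Subgroup.closure {a : Heis ℤ | ∃ g : Heis ℤ, a = g ^ n} ≤ Δ ∧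
      (heisMap (Int.castRingHom (ZMod (n ^ 2)))).ker ≤ Δ := by
  refine ⟨⟨n ^ 2, by positivity, heis_ker_le Δ n hn hidx⟩, ?_, heis_ker_le Δ n hn hidx⟩
  rw [Subgroup.closure_le]
  rintro a ⟨g, rfl⟩
  exact Heis.pow_index_mem_heis Δ n hn hidx g
end
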